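/- Let a_1, …, a_n, B, k be positive integers with Σ_{j=1}^n a_j = kB. Let G be the undirected flow network with vertices s_1, s_2, t_1, t_2, v_1, …, v_n, w_1, …, w_k and edges with capacities: s_1 v_j of capacity a_j and s_2 v_j of capacity (k−1)a_j for each j ∈ {1, …, n}; w_i v_j of capacity a_j for each i ∈ {1, …, k} and j ∈ {1, …, n}; and w_i t_1 of capacity B and w_i t_2 of capacity (k−1)B for each i ∈ {1, …, k}. Then there exists a partition I_1, …, I_k of {1, …, n} with Σ_{j ∈ I_i} a_j ≤ B for every i ∈ {1, …, k} if and only if there exists a monochrome integer 2-commodity flow in G (with source s_i and sink t_i for commodity i) of value kB for commodity 1 and value (k−1)kB for commodity 2. -/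
import Mathlib


/-- An integer `ℓ`-commodity flow on the undirected flow network with symmetric
capacities `cap`, sources `s` and sinks `t`. -/
def IsMultiFlow {V : Type*} [Fintype V] (ℓ : ℕ) (cap : V → V → ℕ)
    (s t : Fin ℓ → V) (f : Fin ℓ → V → V → ℕ) : Prop :=
  (∀ u v, (∑ i, (f i u v + f i v u)) ≤ cap u v) ∧
  (∀ i, ∀ q, q ≠ s i → q ≠ t i → (∑ u, f i u q) = (∑ u, f i q u))

/-- Vertices of the Bin Packing flow network: `Sum.inl 0 = s₁`,
`Sum.inl 1 = s₂`, `Sum.inl 2 = t₁`, `Sum.inl 3 = t₂`,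
`Sum.inr (Sum.inl j) = vⱼ` and `Sum.inr (Sum.inr i) = wᵢ`. -/
abbrev BPV (n k : ℕ) := Fin 4 ⊕ (Fin n ⊕ Fin k)

/-- The edges of the Bin Packing network, directed version (one direction per
edge). -/
def bpCapD (n k : ℕ) (a : Fin n → ℕ) (B : ℕ) : BPV n k → BPV n k → ℕ
  | Sum.inl i, Sum.inr (Sum.inl j) =>
      if i = 0 then a j else if i = 1 then (k - 1) * a j else 0
  | Sum.inr (Sum.inr _), Sum.inr (Sum.inl j) => a j
  | Sum.inr (Sum.inr _), Sum.inl i =>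
      if i = 2 then B else if i = 3 then (k - 1) * B else 0
  | _, _ => 0

/-- The (symmetric) edge capacities of the Bin Packing network. -/
def bpCap (n k : ℕ) (a : Fin n → ℕ) (B : ℕ) (x y : BPV n k) : ℕ :=
  bpCapD n k a B x y + bpCapD n k a B y x

lemma sumBPV {n k : ℕ} (h : BPV n k → ℕ) :
    ∑ x, h x = h (Sum.inl 0) + h (Sum.inl 1) + h (Sum.inl 2) + h (Sum.inl 3)
      + ((∑ j, h (Sum.inr (Sum.inl j))) + ∑ i, h (Sum.inr (Sum.inr i))) := by
  rw [Fintype.sum_sum_type, Fintype.sum_sum_type, Fin.sum_univ_four]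

def bpFlow (n k : ℕ) (a : Fin n → ℕ) (B : ℕ) (g : Fin n → Fin k) (i : Fin 2) :
    BPV n k → BPV n k → ℕ
  | Sum.inl s, Sum.inr (Sum.inl j) =>
      if s = 0 ∧ i = 0 then a j else if s = 1 ∧ i = 1 then (k - 1) * a j else 0
  | Sum.inr (Sum.inl j), Sum.inr (Sum.inr w) =>
      if (i = 0 ↔ g j = w) then a j else 0
  | Sum.inr (Sum.inr _), Sum.inl t =>
      if t = 2 ∧ i = 0 then B else if t = 3 ∧ i = 1 then (k - 1) * B else 0
  | _, _ => 0

private lemma bp_forward (n k B : ℕ) (hk : 0 < k) (hB : 0 < B)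
    (a : Fin n → ℕ) (ha : ∀ j, 0 < a j) (hsum : (∑ j, a j) = k * B)
    (g : Fin n → Fin k)
    (hgle : ∀ i, (∑ j ∈ Finset.univ.filter (fun j => g j = i), a j) ≤ B) :
    (∃ f : Fin 2 → BPV n k → BPV n k → ℕ,
       IsMultiFlow 2 (bpCap n k a B)
         (![Sum.inl 0, Sum.inl 1] : Fin 2 → BPV n k)
         (![Sum.inl 2, Sum.inl 3] : Fin 2 → BPV n k) f ∧
       (∀ x y, f 0 x y + f 0 y x = 0 ∨ f 1 x y + f 1 y x = 0) ∧
       (∑ x, f 0 (Sum.inl 0) x) = k * B + (∑ x, f 0 x (Sum.inl 0)) ∧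
       (∑ x, f 1 (Sum.inl 1) x) = (k - 1) * k * B + (∑ x, f 1 x (Sum.inl 1))) := by
  obtain ⟨m, rfl⟩ : ∃ m, k = m + 1 := ⟨k - 1, (Nat.succ_pred_eq_of_pos hk).symm⟩
  have hbin : ∀ i, (∑ j ∈ Finset.univ.filter (fun j => g j = i), a j) = B := by
    by_contra hc
    push_neg at hc
    obtain ⟨i0, hi0⟩ := hc
    have h2 : (∑ i : Fin (m+1), ∑ j ∈ Finset.univ.filter (fun j => g j = i), a j)
        < ∑ _i : Fin (m+1), B :=
      Finset.sum_lt_sum (fun i _ => hgle i)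
        ⟨i0, Finset.mem_univ _, lt_of_le_of_ne (hgle i0) hi0⟩
    rw [Finset.sum_fiberwise, hsum, Finset.sum_const, Finset.card_univ] at h2
    simp [mul_comm] at h2
  have hfilter : ∀ w : Fin (m+1), (∑ x, if g x = w then a x else 0) = B := by
    intro w
    rw [← Finset.sum_filter]; exact hbin w
  have hS : ∀ (c : ℕ) (i0 : Fin (m+1)), (∑ x : Fin (m+1), if i0 = x then 0 else c) = m * c := by
    intro c i0
    have h1 : (∑ x : Fin (m+1), ((if i0 = x then 0 else c) + if i0 = x then c else 0))
        = (m+1) * c := by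
      rw [Finset.sum_congr rfl (g := fun _ => c) (fun x _ => by split_ifs <;> simp)]
      simp [Finset.sum_const, Finset.card_univ, mul_comm]
    rw [Finset.sum_add_distrib, Finset.sum_ite_eq] at h1
    simp only [Finset.mem_univ, if_pos] at h1
    have h2 : (m+1) * c = m * c + c := by ring
    omega
  have hT : ∀ w : Fin (m+1), (∑ x, if g x = w then 0 else a x) = m * B := by
    intro w
    have h1 : (∑ x, ((if g x = w then 0 else a x) + if g x = w then a x else 0))
        = (m+1) * B := by
      rw [Finset.sum_congr rfl (g := fun x => a x) (fun x _ => by split_ifs <;> simp)]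
      exact hsum
    rw [Finset.sum_add_distrib, hfilter w] at h1
    have h2 : (m+1) * B = m * B + B := by ring
    omega
  refine ⟨bpFlow n (m+1) a B g, ⟨?_, ?_⟩, ?_, ?_, ?_⟩
  · intro u v
    rw [Fin.sum_univ_two]
    rcases u with s | j | w <;> rcases v with s' | j' | w' <;>
      simp [bpFlow, bpCap, bpCapD] <;>
      split_ifs <;> omega
  · intro i q h1 h2
    fin_cases i <;> simp only [Matrix.cons_val_zero, Matrix.cons_val_one, Matrix.head_cons] at h1 h2 ⊢
    · -- commodity 0
      rcases q with s | j | w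
      · fin_cases s
        · exact absurd rfl h1
        · rw [sumBPV, sumBPV]; simp [bpFlow]
        · exact absurd rfl h2
        · rw [sumBPV, sumBPV]; simp [bpFlow]
      · rw [sumBPV, sumBPV]
        simp [bpFlow, Finset.sum_ite_eq]
      · rw [sumBPV, sumBPV]
        simp only [bpFlow]
        simp [bpFlow]
        first
        | exact hfilter w
        | · simp_rw [@eq_comm _ w]; exact hfilter w
    · rcases q with s | j | w
      · fin_cases s
        · rw [sumBPV, sumBPV]; simp [bpFlow]
        · exact absurd rfl h1
        · rw [sumBPV, sumBPV]; simp [bpFlow]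
        · exact absurd rfl h2
      · rw [sumBPV, sumBPV]
        simp [bpFlow, hS]
      · rw [sumBPV, sumBPV]
        simp [bpFlow]
        first
        | exact hT w
        | · simp_rw [@eq_comm _ w]; exact hT w
  · intro x y
    rcases x with s | j | w <;> rcases y with s' | j' | w'
    · simp [bpFlow]
    · fin_cases s <;> simp [bpFlow]
    · fin_cases s <;> simp [bpFlow]
    · fin_cases s' <;> simp [bpFlow]
    · simp [bpFlow]
    · by_cases h : g j = w' <;> simp [bpFlow, h]
    · fin_cases s' <;> simp [bpFlow]
    · by_cases h : g j' = w <;> simp [bpFlow, h]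
    · simp [bpFlow]
  · rw [sumBPV, sumBPV]
    simp [bpFlow, hsum]
  · rw [sumBPV, sumBPV]
    simp [bpFlow]
    rw [← Finset.mul_sum, hsum]
    ring

private lemma bp_backward (n m B : ℕ) (hB : 0 < B)
    (a : Fin n → ℕ) (ha : ∀ j, 0 < a j) (hsum : (∑ j, a j) = (m+1) * B)
    (f : Fin 2 → BPV n (m+1) → BPV n (m+1) → ℕ)
    (hcap : ∀ u v, (∑ i, (f i u v + f i v u)) ≤ bpCap n (m+1) a B u v)
    (hcons : ∀ i, ∀ q, q ≠ (![Sum.inl 0, Sum.inl 1] : Fin 2 → BPV n (m+1)) i →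
      q ≠ (![Sum.inl 2, Sum.inl 3] : Fin 2 → BPV n (m+1)) i →
      (∑ u, f i u q) = (∑ u, f i q u))
    (hmono : ∀ x y, f 0 x y + f 0 y x = 0 ∨ f 1 x y + f 1 y x = 0)
    (hv1 : (∑ x, f 0 (Sum.inl 0) x) = (m+1) * B + (∑ x, f 0 x (Sum.inl 0)))
    (hv2 : (∑ x, f 1 (Sum.inl 1) x) = m * (m+1) * B + (∑ x, f 1 x (Sum.inl 1))) :
    (∃ g : Fin n → Fin (m+1),
       ∀ i, (∑ j ∈ Finset.univ.filter (fun j => g j = i), a j) ≤ B) := by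
  classical
  have hcap' : ∀ u v, f 0 u v + f 0 v u + (f 1 u v + f 1 v u) ≤ bpCap n (m+1) a B u v := by
    intro u v
    have := hcap u v
    rwa [Fin.sum_univ_two] at this
  have hzcap : ∀ (i : Fin 2) u v, bpCap n (m+1) a B u v = 0 → f i u v = 0 := by
    intro i u v h
    have := hcap' u v
    have h2 : i = 0 ∨ i = 1 := by omega
    rcases h2 with rfl | rfl <;> omega
  -- ===== block s1 =====
  have hcapS1 : ∑ x, bpCap n (m+1) a B (Sum.inl 0) x = (m+1) * B := by
    rw [sumBPV]
    simp [bpCap, bpCapD, hsum]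
  have hb1 : (∑ x, f 0 (Sum.inl 0) x) + (∑ x, f 0 x (Sum.inl 0))
      + ((∑ x, f 1 (Sum.inl 0) x) + (∑ x, f 1 x (Sum.inl 0))) ≤ (m+1) * B := by
    rw [← Finset.sum_add_distrib, ← Finset.sum_add_distrib, ← Finset.sum_add_distrib]
    exact le_of_le_of_eq (Finset.sum_le_sum fun x _ => hcap' _ x) hcapS1
  have hA1 : ∀ x, f 0 (Sum.inl 0) x = bpCap n (m+1) a B (Sum.inl 0) x := by
    have hsum_eq : (∑ x, f 0 (Sum.inl 0) x) = ∑ x, bpCap n (m+1) a B (Sum.inl 0) x := by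
      rw [hcapS1]; omega
    have := (Finset.sum_eq_sum_iff_of_le
      (fun x _ => by have := hcap' (Sum.inl 0) x; omega)).mp hsum_eq
    exact fun x => this x (Finset.mem_univ x)
  have hA2 : ∀ x, f 0 x (Sum.inl 0) = 0 := by
    have h0 : (∑ x, f 0 x (Sum.inl 0)) = 0 := by omega
    exact fun x => Finset.sum_eq_zero_iff.mp h0 x (Finset.mem_univ x)
  have hA3 : ∀ x, f 1 (Sum.inl 0) x = 0 := by
    have h0 : (∑ x, f 1 (Sum.inl 0) x) = 0 := by omega
    exact fun x => Finset.sum_eq_zero_iff.mp h0 x (Finset.mem_univ x)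
  have hA4 : ∀ x, f 1 x (Sum.inl 0) = 0 := by
    have h0 : (∑ x, f 1 x (Sum.inl 0)) = 0 := by omega
    exact fun x => Finset.sum_eq_zero_iff.mp h0 x (Finset.mem_univ x)
  -- ===== block s2 =====
  have hcapS2 : ∑ x, bpCap n (m+1) a B (Sum.inl 1) x = m * (m+1) * B := by
    rw [sumBPV]
    simp [bpCap, bpCapD]
    rw [← Finset.mul_sum, hsum]
    ring
  have hb2 : (∑ x, f 1 (Sum.inl 1) x) + (∑ x, f 1 x (Sum.inl 1))
      + ((∑ x, f 0 (Sum.inl 1) x) + (∑ x, f 0 x (Sum.inl 1))) ≤ m * (m+1) * B := by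
    rw [← Finset.sum_add_distrib, ← Finset.sum_add_distrib, ← Finset.sum_add_distrib]
    refine le_of_le_of_eq (Finset.sum_le_sum fun x _ => ?_) hcapS2
    have := hcap' (Sum.inl 1) x
    omega
  have hB1 : ∀ x, f 1 (Sum.inl 1) x = bpCap n (m+1) a B (Sum.inl 1) x := by
    have hsum_eq : (∑ x, f 1 (Sum.inl 1) x) = ∑ x, bpCap n (m+1) a B (Sum.inl 1) x := by
      rw [hcapS2]; omega
    have := (Finset.sum_eq_sum_iff_of_le
      (fun x _ => by have := hcap' (Sum.inl 1) x; omega)).mp hsum_eq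
    exact fun x => this x (Finset.mem_univ x)
  have hB2 : ∀ x, f 1 x (Sum.inl 1) = 0 := by
    have h0 : (∑ x, f 1 x (Sum.inl 1)) = 0 := by omega
    exact fun x => Finset.sum_eq_zero_iff.mp h0 x (Finset.mem_univ x)
  have hB3 : ∀ x, f 0 (Sum.inl 1) x = 0 := by
    have h0 : (∑ x, f 0 (Sum.inl 1) x) = 0 := by omega
    exact fun x => Finset.sum_eq_zero_iff.mp h0 x (Finset.mem_univ x)
  have hB4 : ∀ x, f 0 x (Sum.inl 1) = 0 := by
    have h0 : (∑ x, f 0 x (Sum.inl 1)) = 0 := by omega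
    exact fun x => Finset.sum_eq_zero_iff.mp h0 x (Finset.mem_univ x)
  -- ===== flow balance at sinks =====
  have hbal : ∀ (i : Fin 2) (sv tv : BPV n (m+1)), sv ≠ tv →
      sv = (![Sum.inl 0, Sum.inl 1] : Fin 2 → BPV n (m+1)) i →
      tv = (![Sum.inl 2, Sum.inl 3] : Fin 2 → BPV n (m+1)) i →
      (∑ y, f i sv y) + (∑ y, f i tv y) = (∑ y, f i y sv) + (∑ y, f i y tv) := by
    intro i sv tv hne hs ht
    have htot : (∑ x, ∑ y, f i x y) = ∑ x, ∑ y, f i y x := Finset.sum_comm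
    have hmem1 : sv ∈ (Finset.univ : Finset (BPV n (m+1))) := Finset.mem_univ _
    have hmem2 : tv ∈ Finset.univ.erase sv := by
      simp [Finset.mem_erase, hne.symm]
    have h1 := Finset.add_sum_erase Finset.univ (fun x => ∑ y, f i x y) hmem1
    have h2 := Finset.add_sum_erase (Finset.univ.erase sv) (fun x => ∑ y, f i x y) hmem2
    have h3 := Finset.add_sum_erase Finset.univ (fun x => ∑ y, f i y x) hmem1
    have h4 := Finset.add_sum_erase (Finset.univ.erase sv) (fun x => ∑ y, f i y x) hmem2
    have hrest : (∑ x ∈ (Finset.univ.erase sv).erase tv, ∑ y, f i x y)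
        = ∑ x ∈ (Finset.univ.erase sv).erase tv, ∑ y, f i y x := by
      refine Finset.sum_congr rfl fun x hx => ?_
      rw [Finset.mem_erase, Finset.mem_erase] at hx
      exact (hcons i x (hs ▸ hx.2.1) (ht ▸ hx.1)).symm
    omega
  have hbal1 := hbal 0 (Sum.inl 0) (Sum.inl 2) (by simp) rfl rfl
  have hbal2 := hbal 1 (Sum.inl 1) (Sum.inl 3) (by simp) rfl rfl
  -- ===== block t1 =====
  have hcapT1 : ∑ x, bpCap n (m+1) a B (Sum.inl 2) x = (m+1) * B := by
    rw [sumBPV]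
    simp [bpCap, bpCapD, Finset.sum_const, Finset.card_univ, mul_comm]
  have hb3 : (∑ x, f 0 (Sum.inl 2) x) + (∑ x, f 0 x (Sum.inl 2))
      + ((∑ x, f 1 (Sum.inl 2) x) + (∑ x, f 1 x (Sum.inl 2))) ≤ (m+1) * B := by
    rw [← Finset.sum_add_distrib, ← Finset.sum_add_distrib, ← Finset.sum_add_distrib]
    exact le_of_le_of_eq (Finset.sum_le_sum fun x _ => hcap' _ x) hcapT1
  have hC1 : ∀ x, f 0 x (Sum.inl 2) = bpCap n (m+1) a B (Sum.inl 2) x := by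
    have hsum_eq : (∑ x, f 0 x (Sum.inl 2)) = ∑ x, bpCap n (m+1) a B (Sum.inl 2) x := by
      rw [hcapT1]; omega
    have := (Finset.sum_eq_sum_iff_of_le
      (fun x _ => by have := hcap' (Sum.inl 2) x; omega)).mp hsum_eq
    exact fun x => this x (Finset.mem_univ x)
  have hC2 : ∀ x, f 0 (Sum.inl 2) x = 0 := by
    have h0 : (∑ x, f 0 (Sum.inl 2) x) = 0 := by omega
    exact fun x => Finset.sum_eq_zero_iff.mp h0 x (Finset.mem_univ x)
  have hC3 : ∀ x, f 1 (Sum.inl 2) x = 0 := by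
    have h0 : (∑ x, f 1 (Sum.inl 2) x) = 0 := by omega
    exact fun x => Finset.sum_eq_zero_iff.mp h0 x (Finset.mem_univ x)
  have hC4 : ∀ x, f 1 x (Sum.inl 2) = 0 := by
    have h0 : (∑ x, f 1 x (Sum.inl 2)) = 0 := by omega
    exact fun x => Finset.sum_eq_zero_iff.mp h0 x (Finset.mem_univ x)
  -- ===== block t2 =====
  have hcapT2 : ∑ x, bpCap n (m+1) a B (Sum.inl 3) x = m * (m+1) * B := by
    rw [sumBPV]
    simp [bpCap, bpCapD, Finset.sum_const, Finset.card_univ]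
    ring
  have hb4 : (∑ x, f 1 (Sum.inl 3) x) + (∑ x, f 1 x (Sum.inl 3))
      + ((∑ x, f 0 (Sum.inl 3) x) + (∑ x, f 0 x (Sum.inl 3))) ≤ m * (m+1) * B := by
    rw [← Finset.sum_add_distrib, ← Finset.sum_add_distrib, ← Finset.sum_add_distrib]
    refine le_of_le_of_eq (Finset.sum_le_sum fun x _ => ?_) hcapT2
    have := hcap' (Sum.inl 3) x
    omega
  have hD1 : ∀ x, f 1 x (Sum.inl 3) = bpCap n (m+1) a B (Sum.inl 3) x := by
    have hsum_eq : (∑ x, f 1 x (Sum.inl 3)) = ∑ x, bpCap n (m+1) a B (Sum.inl 3) x := by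
      rw [hcapT2]; omega
    have := (Finset.sum_eq_sum_iff_of_le
      (fun x _ => by have := hcap' (Sum.inl 3) x; omega)).mp hsum_eq
    exact fun x => this x (Finset.mem_univ x)
  have hD2 : ∀ x, f 1 (Sum.inl 3) x = 0 := by
    have h0 : (∑ x, f 1 (Sum.inl 3) x) = 0 := by omega
    exact fun x => Finset.sum_eq_zero_iff.mp h0 x (Finset.mem_univ x)
  have hD3 : ∀ x, f 0 (Sum.inl 3) x = 0 := by
    have h0 : (∑ x, f 0 (Sum.inl 3) x) = 0 := by omega
    exact fun x => Finset.sum_eq_zero_iff.mp h0 x (Finset.mem_univ x)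
  have hD4 : ∀ x, f 0 x (Sum.inl 3) = 0 := by
    have h0 : (∑ x, f 0 x (Sum.inl 3)) = 0 := by omega
    exact fun x => Finset.sum_eq_zero_iff.mp h0 x (Finset.mem_univ x)
  -- ===== zero-capacity edges =====
  have hvv0 : ∀ (i : Fin 2) (j j' : Fin n),
      f i (Sum.inr (Sum.inl j)) (Sum.inr (Sum.inl j')) = 0 :=
    fun i j j' => hzcap i _ _ (by simp [bpCap, bpCapD])
  have hww0 : ∀ (i : Fin 2) (i1 i2 : Fin (m+1)),
      f i (Sum.inr (Sum.inr i1)) (Sum.inr (Sum.inr i2)) = 0 :=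
    fun i i1 i2 => hzcap i _ _ (by simp [bpCap, bpCapD])
  have hA1v : ∀ j, f 0 (Sum.inl 0) (Sum.inr (Sum.inl j)) = a j := fun j => by
    rw [hA1]; simp [bpCap, bpCapD]
  have hA1w : ∀ i, f 0 (Sum.inl 0) (Sum.inr (Sum.inr i)) = 0 := fun i => by
    rw [hA1]; simp [bpCap, bpCapD]
  have hB1v : ∀ j, f 1 (Sum.inl 1) (Sum.inr (Sum.inl j)) = m * a j := fun j => by
    rw [hB1]; simp [bpCap, bpCapD]
  have hC1v : ∀ j, f 0 (Sum.inr (Sum.inl j)) (Sum.inl 2) = 0 := fun j => by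
    rw [hC1]; simp [bpCap, bpCapD]
  have hC1w : ∀ i, f 0 (Sum.inr (Sum.inr i)) (Sum.inl 2) = B := fun i => by
    rw [hC1]; simp [bpCap, bpCapD]
  have hD1v : ∀ j, f 1 (Sum.inr (Sum.inl j)) (Sum.inl 3) = 0 := fun j => by
    rw [hD1]; simp [bpCap, bpCapD]
  -- ===== per-item analysis =====
  have key : ∀ j : Fin n,
      (∀ i, f 0 (Sum.inr (Sum.inr i)) (Sum.inr (Sum.inl j)) = 0) ∧
      ∃ i0 : Fin (m+1), f 0 (Sum.inr (Sum.inl j)) (Sum.inr (Sum.inr i0)) = a j ∧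
        ∀ i', i' ≠ i0 → f 0 (Sum.inr (Sum.inl j)) (Sum.inr (Sum.inr i')) = 0 := by
    intro j
    have hc0 := hcons 0 (Sum.inr (Sum.inl j)) (by simp) (by simp)
    have hc1 := hcons 1 (Sum.inr (Sum.inl j)) (by simp) (by simp)
    rw [sumBPV, sumBPV] at hc0 hc1
    simp only [hA1v, hB3, hC2, hD3, hA2, hB4, hC1v, hD4, hvv0,
      Finset.sum_const_zero, add_zero, zero_add] at hc0
    simp only [hA3, hB1v, hC3, hD2, hA4, hB2, hC4, hD1v, hvv0,
      Finset.sum_const_zero, add_zero, zero_add] at hc1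
    have hcapvw : ∀ i : Fin (m+1),
        bpCap n (m+1) a B (Sum.inr (Sum.inl j)) (Sum.inr (Sum.inr i)) = a j :=
      fun i => by simp [bpCap, bpCapD]
    have hconst : (∑ _i : Fin (m+1), a j) = (m+1) * a j := by
      simp [Finset.sum_const, Finset.card_univ, mul_comm]
    have hsplit : (∑ i, f 0 (Sum.inr (Sum.inl j)) (Sum.inr (Sum.inr i)))
        + (∑ i, f 0 (Sum.inr (Sum.inr i)) (Sum.inr (Sum.inl j)))
        + ((∑ i, f 1 (Sum.inr (Sum.inl j)) (Sum.inr (Sum.inr i)))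
        + (∑ i, f 1 (Sum.inr (Sum.inr i)) (Sum.inr (Sum.inl j)))) ≤ (m+1) * a j := by
      rw [← Finset.sum_add_distrib, ← Finset.sum_add_distrib, ← Finset.sum_add_distrib]
      refine le_of_le_of_eq (Finset.sum_le_sum fun i _ => hcap' _ _) ?_
      rw [Finset.sum_congr rfl (fun i _ => hcapvw i), hconst]
    have hrel : m * a j + a j = (m+1) * a j := by ring
    have hwv00 : (∑ i, f 0 (Sum.inr (Sum.inr i)) (Sum.inr (Sum.inl j))) = 0 := by omega
    have hwv01 : (∑ i, f 1 (Sum.inr (Sum.inr i)) (Sum.inr (Sum.inl j))) = 0 := by omega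
    have hzer0 : ∀ i, f 0 (Sum.inr (Sum.inr i)) (Sum.inr (Sum.inl j)) = 0 :=
      fun i => Finset.sum_eq_zero_iff.mp hwv00 i (Finset.mem_univ i)
    have hzer1 : ∀ i, f 1 (Sum.inr (Sum.inr i)) (Sum.inr (Sum.inl j)) = 0 :=
      fun i => Finset.sum_eq_zero_iff.mp hwv01 i (Finset.mem_univ i)
    have hsum0 : (∑ i, f 0 (Sum.inr (Sum.inl j)) (Sum.inr (Sum.inr i))) = a j := by omega
    have hs2 : (∑ i : Fin (m+1), (f 0 (Sum.inr (Sum.inl j)) (Sum.inr (Sum.inr i))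
        + f 1 (Sum.inr (Sum.inl j)) (Sum.inr (Sum.inr i)))) = ∑ _i : Fin (m+1), a j := by
      rw [Finset.sum_add_distrib, hconst]
      omega
    have hsat : ∀ i, f 0 (Sum.inr (Sum.inl j)) (Sum.inr (Sum.inr i))
        + f 1 (Sum.inr (Sum.inl j)) (Sum.inr (Sum.inr i)) = a j := fun i =>
      (Finset.sum_eq_sum_iff_of_le (fun i _ => by
        have := hcap' (Sum.inr (Sum.inl j)) (Sum.inr (Sum.inr i))
        rw [hcapvw i] at this
        omega)).mp hs2 i (Finset.mem_univ i)
    refine ⟨hzer0, ?_⟩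
    have hex : ∃ i0, f 0 (Sum.inr (Sum.inl j)) (Sum.inr (Sum.inr i0)) ≠ 0 := by
      by_contra h
      push_neg at h
      rw [Finset.sum_eq_zero (fun i _ => h i)] at hsum0
      exact absurd hsum0.symm (ha j).ne'
    obtain ⟨i0, hi0⟩ := hex
    have hi0' : f 0 (Sum.inr (Sum.inl j)) (Sum.inr (Sum.inr i0)) = a j := by
      rcases hmono (Sum.inr (Sum.inl j)) (Sum.inr (Sum.inr i0)) with hm | hm
      · omega
      · have := hsat i0
        omega
    refine ⟨i0, hi0', fun i' hne => ?_⟩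
    have h1 := Finset.add_sum_erase Finset.univ
      (fun i => f 0 (Sum.inr (Sum.inl j)) (Sum.inr (Sum.inr i))) (Finset.mem_univ i0)
    have h2 : f 0 (Sum.inr (Sum.inl j)) (Sum.inr (Sum.inr i'))
        ≤ ∑ i ∈ Finset.univ.erase i0, f 0 (Sum.inr (Sum.inl j)) (Sum.inr (Sum.inr i)) :=
      Finset.single_le_sum (f := fun i => f 0 (Sum.inr (Sum.inl j)) (Sum.inr (Sum.inr i)))
        (fun _ _ => Nat.zero_le _) (Finset.mem_erase.mpr ⟨hne, Finset.mem_univ _⟩)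
    omega
  choose hwv0 key2 using key
  choose g hg1 hg2 using key2
  refine ⟨g, fun i => ?_⟩
  have hc := hcons 0 (Sum.inr (Sum.inr i)) (by simp) (by simp)
  rw [sumBPV, sumBPV] at hc
  simp only [hA1w, hB3, hC2, hD3, hA2, hB4, hC1w, hD4, hww0, hwv0,
    Finset.sum_const_zero, add_zero, zero_add] at hc
  have hvals : ∀ j, f 0 (Sum.inr (Sum.inl j)) (Sum.inr (Sum.inr i))
      = if g j = i then a j else 0 := by
    intro j
    by_cases h : g j = i
    · rw [if_pos h, ← h]
      exact hg1 j
    · rw [if_neg h]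
      exact hg2 j i (fun hh => h hh.symm)
  rw [Finset.sum_congr rfl (fun j _ => hvals j)] at hc
  rw [Finset.sum_filter]
  exact le_of_eq hc

/-- Correctness of the reduction from Bin Packing to monochrome undirected
integer 2-commodity flow (Theorem 1.9). -/
theorem binpacking_iff_monochrome_flow (n k B : ℕ) (hk : 0 < k) (hB : 0 < B)
    (a : Fin n → ℕ) (ha : ∀ j, 0 < a j) (hsum : (∑ j, a j) = k * B) :
    (∃ g : Fin n → Fin k,
       ∀ i, (∑ j ∈ Finset.univ.filter (fun j => g j = i), a j) ≤ B) ↔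
    (∃ f : Fin 2 → BPV n k → BPV n k → ℕ,
       IsMultiFlow 2 (bpCap n k a B)
         (![Sum.inl 0, Sum.inl 1] : Fin 2 → BPV n k)
         (![Sum.inl 2, Sum.inl 3] : Fin 2 → BPV n k) f ∧
       -- monochrome: no edge carries positive flow of both commodities
       (∀ x y, f 0 x y + f 0 y x = 0 ∨ f 1 x y + f 1 y x = 0) ∧
       -- commodity 1 has value k·B
       (∑ x, f 0 (Sum.inl 0) x) = k * B + (∑ x, f 0 x (Sum.inl 0)) ∧
       -- commodity 2 has value (k−1)·k·B
       (∑ x, f 1 (Sum.inl 1) x) = (k - 1) * k * B + (∑ x, f 1 x (Sum.inl 1))) := by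
  constructor
  · rintro ⟨g, hg⟩
    exact bp_forward n k B hk hB a ha hsum g hg
  · rintro ⟨f, ⟨hcap, hcons⟩, hmono, hv1, hv2⟩
    obtain ⟨m, rfl⟩ : ∃ m, k = m + 1 := ⟨k - 1, (Nat.succ_pred_eq_of_pos hk).symm⟩
    simp only [Nat.add_sub_cancel] at hv2
    exact bp_backward n m B hB a ha hsum f hcap hcons hmono hv1 hv2
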